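/- arXiv:math/0002008 — 3 statements merged into one kernel-verified Lean document; each statement's English description precedes it below -/
import Mathlib

section
/- Let a < t be real numbers, let d : [a,t] → ℝ be continuous with 0 < d(τ) < 1 for every τ ∈ [a,t], and let f : [a,t] → ℝ be continuous. Then the function τ ↦ f(τ) / (Γ(1 − d(τ)) · (t − τ)^{d(τ)}) is Lebesgue integrable on the interval [a,t), where Γ denotes the real Gamma function. -/
/-!
Write the integrand as `(f τ / Γ(1 - d τ)) * (t - τ) ^ (-d τ)`. The first factor is continuous on
the compact interval `[a, t]`, since `1 - d τ > 0` keeps `Γ` away from its poles and positive. The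
kernel `(t - τ) ^ (-d τ)` is dominated by `(t - τ) ^ (-D) + 1`, where `D < 1` is the maximum of `d`,
and this majorant is integrable near the singularity `τ = t`.
-/

open MeasureTheory Real Set

theorem Real.rpow_le_rpow_add_one {x p q : ℝ} (hx : 0 < x) (hqp : q ≤ p) (hp : p ≤ 0) :
    x ^ p ≤ x ^ q + 1 := by
  rcases le_or_gt x 1 with hx1 | hx1
  · linarith [rpow_le_rpow_of_exponent_ge hx hx1 hqp]
  · have hle_one : x ^ p ≤ 1 := by
      simpa using rpow_le_rpow_of_exponent_le hx1.le hp
    linarith [rpow_nonneg hx.le q]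

theorem ContinuousOn.Gamma {g : ℝ → ℝ} {s : Set ℝ} (hg : ContinuousOn g s)
    (hpoles : ∀ x ∈ s, ∀ m : ℕ, g x ≠ -m) : ContinuousOn (fun x => Gamma (g x)) s :=
  fun x hx => (differentiableAt_Gamma (hpoles x hx)).continuousAt.comp_continuousWithinAt (hg x hx)

theorem intervalIntegrable_sub_rpow' {r : ℝ} (hr : -1 < r) (t a b : ℝ) :
    IntervalIntegrable (fun x => (t - x) ^ r) volume a b := by
  simpa using (intervalIntegral.intervalIntegrable_rpow' (a := t - a) (b := t - b) hr).comp_sub_left t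

theorem integrableOn_Ico_sub_rpow_neg {a t : ℝ} {d : ℝ → ℝ} (hd : ContinuousOn d (Icc a t))
    (hd01 : ∀ τ ∈ Icc a t, 0 ≤ d τ ∧ d τ < 1) :
    IntegrableOn (fun τ => (t - τ) ^ (-d τ)) (Ico a t) := by
  rcases le_or_gt t a with hta | hat
  · simp [Ico_eq_empty_of_le hta]
  obtain ⟨τ₀, hτ₀, hmax⟩ := isCompact_Icc.exists_isMaxOn (nonempty_Icc.2 hat.le) hd
  have hmajorant : IntegrableOn (fun τ => (t - τ) ^ (-d τ₀) + 1) (Ico a t) :=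
    ((intervalIntegrable_iff_integrableOn_Ico_of_le hat.le).1
      (intervalIntegrable_sub_rpow' (by linarith [(hd01 τ₀ hτ₀).2]) t a t)).add
      (integrableOn_const measure_Ico_lt_top.ne)
  have hcont : ContinuousOn (fun τ => (t - τ) ^ (-d τ)) (Ico a t) :=
    (continuousOn_const.sub continuousOn_id).rpow (hd.neg.mono Ico_subset_Icc_self)
      fun τ hτ => Or.inl (sub_ne_zero.2 hτ.2.ne')
  refine hmajorant.mono' (hcont.aestronglyMeasurable measurableSet_Ico) ?_
  filter_upwards [ae_restrict_mem measurableSet_Ico] with τ hτ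
  have hpos : 0 < t - τ := sub_pos.2 hτ.2
  have hτ' : τ ∈ Icc a t := Ico_subset_Icc_self hτ
  rw [norm_of_nonneg (rpow_nonneg hpos.le _)]
  exact rpow_le_rpow_add_one hpos (neg_le_neg (hmax hτ')) (neg_nonpos.2 (hd01 τ hτ').1)

theorem stmt_0_general (a t : ℝ) (d f : ℝ → ℝ)
    (hd : ContinuousOn d (Icc a t))
    (hd01 : ∀ τ ∈ Icc a t, 0 < d τ ∧ d τ < 1)
    (hf : ContinuousOn f (Icc a t)) :
    IntegrableOn (fun τ => f τ / (Real.Gamma (1 - d τ) * (t - τ) ^ (d τ))) (Ico a t) := by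
  have hΓ : ContinuousOn (fun τ => Gamma (1 - d τ)) (Icc a t) :=
    (continuousOn_const.sub hd).Gamma fun τ hτ m (hm : 1 - d τ = -m) => by
      linarith [(hd01 τ hτ).2, (m.cast_nonneg : (0 : ℝ) ≤ m)]
  have hcoeff : ContinuousOn (fun τ => f τ / Gamma (1 - d τ)) (Icc a t) :=
    hf.div hΓ fun τ hτ => (Gamma_pos_of_pos (by linarith [(hd01 τ hτ).2])).ne'
  have hkernel := integrableOn_Ico_sub_rpow_neg hd fun τ hτ => ⟨(hd01 τ hτ).1.le, (hd01 τ hτ).2⟩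
  refine (hkernel.continuousOn_mul_of_subset hcoeff isCompact_Icc measurableSet_Ico
    Ico_subset_Icc_self).congr_fun (fun τ hτ => ?_) measurableSet_Ico
  dsimp only
  rw [rpow_neg (sub_nonneg.2 hτ.2.le), ← div_eq_mul_inv, div_div]

/-- For `a < t`, `d` continuous on `[a,t]` with values in `(0,1)`, and `f` continuous on
`[a,t]`, the function `τ ↦ f τ / (Γ(1 - d τ) * (t - τ) ^ (d τ))` is Lebesgue integrable
on `[a, t)`. -/
theorem stmt_0 (a t : ℝ) (hat : a < t) (d f : ℝ → ℝ)
    (hd : ContinuousOn d (Icc a t))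
    (hd01 : ∀ τ ∈ Icc a t, 0 < d τ ∧ d τ < 1)
    (hf : ContinuousOn f (Icc a t)) :
    IntegrableOn (fun τ => f τ / (Real.Gamma (1 - d τ) * (t - τ) ^ (d τ))) (Ico a t) :=
  stmt_0_general a t d f hd hd01 hf
end

section
/- Let a < b be real numbers, let d : [a,b] → ℝ be continuous with 0 < d(τ) < 1 for every τ ∈ [a,b], and let f : [a,b] → ℝ be continuous. Then the function F : [a,b] → ℝ defined by F(t) = ∫_a^t f(τ) / (Γ(1 − d(τ)) · (t − τ)^{d(τ)}) dτ (with F(a) = 0) is continuous on [a,b]. -/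
/-!
Substituting `u = t - τ` writes `F t` as `∫ u in (0, b - a], 1_{u ≤ t - a} φ (t - u) u` with
`φ τ u = f τ / (Γ(1 - d τ) * u ^ d τ)`. For fixed `u > 0` this integrand is continuous in `t`
except at `t = a + u`, and it is dominated by `M * (1 + u ^ (-δ))`, where `M` bounds
`|f / Γ(1 - d)|` and, by compactness, `d ≤ δ < 1`; this bound is integrable at `0`, so dominated
convergence gives the continuity of `F`.
-/

open MeasureTheory Real Set Filter Topology

section IntegralCompSub

variable {E : Type*} [NormedAddCommGroup E] {a b : ℝ} {φ : ℝ → ℝ → E}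

theorem intervalIntegral_comp_sub_eq_integral_indicator [NormedSpace ℝ E] {t : ℝ} (hat : a ≤ t)
    (htb : t ≤ b) :
    ∫ τ in a..t, φ τ (t - τ) =
      ∫ u in Ioc 0 (b - a), (Iic (t - a)).indicator (fun u => φ (t - u) u) u := by
  have h := intervalIntegral.integral_comp_sub_left (a := 0) (b := t - a) (fun τ => φ τ (t - τ)) t
  simp only [sub_sub_cancel, sub_zero] at h
  rw [← h, intervalIntegral.integral_of_le (sub_nonneg.2 hat),
    setIntegral_indicator measurableSet_Iic, Ioc_inter_Iic, min_eq_right (by linarith)]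

theorem aestronglyMeasurable_indicator_comp_sub
    (hφ : ContinuousOn (Function.uncurry φ) (Icc a b ×ˢ Ioi 0)) {t : ℝ} (htb : t ≤ b) :
    AEStronglyMeasurable (fun u => (Iic (t - a)).indicator (fun u => φ (t - u) u) u)
      (volume.restrict (Ioc 0 (b - a))) := by
  refine (aestronglyMeasurable_indicator_iff measurableSet_Iic).2 ?_
  rw [Measure.restrict_restrict measurableSet_Iic]
  refine ContinuousOn.aestronglyMeasurable ?_ (measurableSet_Iic.inter measurableSet_Ioc)
  refine hφ.comp (f := fun u => (t - u, u)) (by fun_prop) fun u hu => ⟨⟨?_, ?_⟩, hu.2.1⟩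
  · linarith [hu.1.out]
  · linarith [hu.2.1]

theorem norm_indicator_comp_sub_le {g : ℝ → ℝ}
    (hφg : ∀ τ ∈ Icc a b, ∀ u ∈ Ioc 0 (b - a), ‖φ τ u‖ ≤ g u)
    {t u : ℝ} (ht : t ∈ Icc a b) (hu : u ∈ Ioc 0 (b - a)) :
    ‖(Iic (t - a)).indicator (fun u => φ (t - u) u) u‖ ≤ g u := by
  by_cases hut : u ≤ t - a
  · rw [indicator_of_mem (mem_Iic.2 hut)]
    exact hφg _ ⟨by linarith, by linarith [hu.1, ht.2]⟩ u hu
  · rw [indicator_of_notMem (mt mem_Iic.1 hut), norm_zero]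
    exact (norm_nonneg _).trans (hφg a ⟨le_rfl, by linarith [hu.1, hu.2]⟩ u hu)

theorem continuousWithinAt_indicator_comp_sub
    (hφ : ContinuousOn (Function.uncurry φ) (Icc a b ×ˢ Ioi 0)) {t₀ u : ℝ} (ht₀ : t₀ ∈ Icc a b)
    (hu : 0 < u) (hut₀ : u ≠ t₀ - a) :
    ContinuousWithinAt (fun t => (Iic (t - a)).indicator (fun u => φ (t - u) u) u)
      (Icc a b) t₀ := by
  rcases hut₀.lt_or_gt with hlt | hgt
  · have hnhds : Ioi (a + u) ∈ 𝓝 t₀ := Ioi_mem_nhds (by linarith)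
    have hkernel : ContinuousWithinAt (fun t => φ (t - u) u) (Icc a b ∩ Ioi (a + u)) t₀ :=
      (hφ (t₀ - u, u) ⟨⟨by linarith, by linarith [ht₀.2]⟩, hu⟩).comp
        (f := fun t => (t - u, u)) (by fun_prop)
        fun t (ht : t ∈ Icc a b ∩ Ioi (a + u)) =>
          ⟨⟨by linarith [ht.2.out], by linarith [ht.1.2]⟩, hu⟩
    refine ((continuousWithinAt_inter hnhds).1 hkernel).congr_of_eventuallyEq ?_
      (indicator_of_mem (by simp only [mem_Iic]; linarith) _)
    filter_upwards [mem_nhdsWithin_of_mem_nhds hnhds] with t ht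
    exact indicator_of_mem (by simp only [mem_Iic]; linarith [ht.out]) _
  · refine (continuousWithinAt_const (b := (0 : E))).congr_of_eventuallyEq ?_
      (indicator_of_notMem (by simp only [mem_Iic, not_le]; linarith) _)
    filter_upwards [mem_nhdsWithin_of_mem_nhds (Iio_mem_nhds (by linarith : t₀ < a + u))]
      with t ht
    exact indicator_of_notMem (by simp only [mem_Iic, not_le]; linarith [ht.out]) _

theorem continuousOn_intervalIntegral_comp_sub_of_dominated [NormedSpace ℝ E] {g : ℝ → ℝ}
    (hφ : ContinuousOn (Function.uncurry φ) (Icc a b ×ˢ Ioi 0))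
    (hφg : ∀ τ ∈ Icc a b, ∀ u ∈ Ioc 0 (b - a), ‖φ τ u‖ ≤ g u)
    (hg : IntegrableOn g (Ioc 0 (b - a))) :
    ContinuousOn (fun t => ∫ τ in a..t, φ τ (t - τ)) (Icc a b) := by
  intro t₀ ht₀
  have hcongr : EqOn
      (fun t => ∫ u in Ioc 0 (b - a), (Iic (t - a)).indicator (fun u => φ (t - u) u) u)
      (fun t => ∫ τ in a..t, φ τ (t - τ)) (Icc a b) := fun t ht =>
    (intervalIntegral_comp_sub_eq_integral_indicator ht.1 ht.2).symm
  refine ContinuousWithinAt.congr ?_ hcongr.symm (hcongr ht₀).symm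
  refine continuousWithinAt_of_dominated ?_ ?_ hg ?_
  · filter_upwards [self_mem_nhdsWithin] with t ht
    exact aestronglyMeasurable_indicator_comp_sub hφ ht.2
  · filter_upwards [self_mem_nhdsWithin] with t ht
    exact (ae_restrict_iff' measurableSet_Ioc).2
      (ae_of_all _ fun u hu => norm_indicator_comp_sub_le hφg ht hu)
  · filter_upwards [ae_restrict_mem measurableSet_Ioc, Measure.ae_ne _ (t₀ - a)] with u hu hne
    exact continuousWithinAt_indicator_comp_sub hφ ht₀ hu.1 hne

end IntegralCompSub

theorem Real.rpow_neg_le_one_add_rpow_neg {u e δ : ℝ} (hu : 0 < u) (he : 0 ≤ e) (heδ : e ≤ δ) :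
    u ^ (-e) ≤ 1 + u ^ (-δ) := by
  rcases le_total u 1 with hu1 | hu1
  · linarith [rpow_le_rpow_of_exponent_ge hu hu1 (neg_le_neg heδ), rpow_nonneg hu.le 1]
  · linarith [rpow_le_one_of_one_le_of_nonpos hu1 (neg_nonpos.2 he), rpow_nonneg hu.le (-δ)]

theorem integrableOn_one_add_rpow_neg {δ : ℝ} (hδ : δ < 1) (L : ℝ) :
    IntegrableOn (fun u : ℝ => 1 + u ^ (-δ)) (Ioc 0 L) :=
  (intervalIntegrable_const.add (intervalIntegral.intervalIntegrable_rpow' (by linarith))).1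

theorem continuousOn_Gamma_one_sub {d : ℝ → ℝ} {s : Set ℝ} (hd : ContinuousOn d s)
    (hd1 : ∀ τ ∈ s, d τ < 1) : ContinuousOn (fun τ => Gamma (1 - d τ)) s :=
  differentiableOn_Gamma_Ioi.continuousOn.comp (continuousOn_const.sub hd)
    fun τ hτ => sub_pos.2 (hd1 τ hτ)

theorem continuousOn_div_Gamma_one_sub_mul_rpow {d f : ℝ → ℝ} {s : Set ℝ}
    (hd : ContinuousOn d s) (hd1 : ∀ τ ∈ s, d τ < 1) (hf : ContinuousOn f s) :
    ContinuousOn (fun p : ℝ × ℝ => f p.1 / (Gamma (1 - d p.1) * p.2 ^ d p.1)) (s ×ˢ Ioi 0) := by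
  have hfst : MapsTo Prod.fst (s ×ˢ Ioi (0 : ℝ)) s := fun p hp => hp.1
  refine (hf.comp continuousOn_fst hfst).div (((continuousOn_Gamma_one_sub hd hd1).comp
    continuousOn_fst hfst).mul (continuousOn_snd.rpow (hd.comp continuousOn_fst hfst)
      fun p hp => Or.inl (ne_of_gt hp.2))) fun p hp => ?_
  exact (mul_pos (Gamma_pos_of_pos (sub_pos.2 (hd1 _ hp.1))) (rpow_pos_of_pos hp.2 _)).ne'

theorem stmt_1_general (a b : ℝ) (d f : ℝ → ℝ)
    (hd : ContinuousOn d (Icc a b))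
    (hd01 : ∀ τ ∈ Icc a b, 0 < d τ ∧ d τ < 1)
    (hf : ContinuousOn f (Icc a b)) :
    ContinuousOn (fun t => ∫ τ in a..t, f τ / (Real.Gamma (1 - d τ) * (t - τ) ^ (d τ)))
      (Icc a b) := by
  have hd1 : ∀ τ ∈ Icc a b, d τ < 1 := fun τ hτ => (hd01 τ hτ).2
  obtain ⟨ε, hε, hεd⟩ : ∃ ε, 0 < ε ∧ ∀ τ ∈ Icc a b, ε ≤ 1 - d τ :=
    isCompact_Icc.exists_forall_le' (continuousOn_const.sub hd) fun τ hτ => sub_pos.2 (hd1 τ hτ)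
  obtain ⟨M, hM⟩ : ∃ M, ∀ τ ∈ Icc a b, ‖f τ / Gamma (1 - d τ)‖ ≤ M :=
    isCompact_Icc.exists_bound_of_continuousOn <| hf.div (continuousOn_Gamma_one_sub hd hd1)
      fun τ hτ => (Gamma_pos_of_pos (sub_pos.2 (hd1 τ hτ))).ne'
  refine continuousOn_intervalIntegral_comp_sub_of_dominated
    (φ := fun τ u => f τ / (Gamma (1 - d τ) * u ^ d τ))
    (g := fun u => M * (1 + u ^ (-(1 - ε))))
    (continuousOn_div_Gamma_one_sub_mul_rpow hd hd1 hf) (fun τ hτ u hu => ?_)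
    ((integrableOn_one_add_rpow_neg (by linarith) _).const_mul M)
  calc ‖f τ / (Gamma (1 - d τ) * u ^ d τ)‖ = ‖f τ / Gamma (1 - d τ)‖ * u ^ (-d τ) := by
        rw [div_mul_eq_div_div, norm_div, Real.norm_of_nonneg (rpow_nonneg hu.1.le _),
          rpow_neg hu.1.le, div_eq_mul_inv]
    _ ≤ M * (1 + u ^ (-(1 - ε))) :=
        mul_le_mul (hM τ hτ) (rpow_neg_le_one_add_rpow_neg hu.1 (hd01 τ hτ).1.le
          (by linarith [hεd τ hτ])) (rpow_nonneg hu.1.le _) ((norm_nonneg _).trans (hM τ hτ))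

/-- For `a < b`, `d` continuous on `[a,b]` with values in `(0,1)`, and `f` continuous on
`[a,b]`, the function `F t = ∫_a^t f τ / (Γ(1 - d τ) * (t - τ) ^ (d τ)) dτ` is continuous
on `[a,b]`. -/
theorem stmt_1 (a b : ℝ) (hab : a < b) (d f : ℝ → ℝ)
    (hd : ContinuousOn d (Icc a b))
    (hd01 : ∀ τ ∈ Icc a b, 0 < d τ ∧ d τ < 1)
    (hf : ContinuousOn f (Icc a b)) :
    ContinuousOn (fun t => ∫ τ in a..t, f τ / (Real.Gamma (1 - d τ) * (t - τ) ^ (d τ)))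
      (Icc a b) :=
  stmt_1_general a b d f hd hd01 hf
end

section
/- Let T > 0 and let f : [0,T] → ℝ be continuously differentiable. Then for every t ∈ (0,T], lim_{ε→0⁺} [ f(0) t^{ε−1}/Γ(ε) + (1/Γ(ε)) ∫_0^t (t − τ)^{ε−1} f′(τ) dτ ] = f′(t). -/
/-!
Since `1 / Γ(ε) = ε / Γ(ε + 1) → 0`, the boundary term `f(0) t^(ε-1) / Γ(ε)` vanishes in the
limit, and the other term is the Riemann–Liouville integral of order `ε` of `f'` at `t`. After the
substitution `x = t - τ` its kernel `x^(ε-1) / Γ(ε)` on `(0, t]` is a family of peak functions at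
`0`: nonnegative, of total mass `t^ε / Γ(ε + 1) → 1`, and uniformly small on `[δ, t]` for every
`δ > 0`. Hence the fractional integral tends to the left limit of `f'` at `t`, which is `f'(t)`.
-/

open MeasureTheory Real Set Filter Topology

namespace Real

theorem tendsto_Gamma_add_one_nhds_zero :
    Tendsto (fun s : ℝ => Gamma (s + 1)) (𝓝 0) (𝓝 1) := by
  have hΓ : ContinuousAt Gamma 1 :=
    (differentiableAt_Gamma fun m => by linarith [(m.cast_nonneg : (0:ℝ) ≤ m)]).continuousAt
  have hshift : Tendsto (fun s : ℝ => s + 1) (𝓝 0) (𝓝 1) := by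
    simpa using (continuous_add_const (1:ℝ)).tendsto 0
  simpa only [Gamma_one, Function.comp_def] using hΓ.tendsto.comp hshift

theorem inv_Gamma_eq_div_Gamma_add_one (s : ℝ) : (Gamma s)⁻¹ = s / Gamma (s + 1) := by
  rcases eq_or_ne s 0 with rfl | hs
  · simp [Gamma_zero]
  · rw [Gamma_add_one hs]
    field_simp

theorem tendsto_inv_Gamma_nhds_zero : Tendsto (fun s : ℝ => (Gamma s)⁻¹) (𝓝 0) (𝓝 0) := by
  simpa only [inv_Gamma_eq_div_Gamma_add_one, zero_div, Pi.div_def, id] using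
    tendsto_id.div tendsto_Gamma_add_one_nhds_zero one_ne_zero

end Real

theorem integral_rpow_sub_one {ε : ℝ} (hε : 0 < ε) (t : ℝ) :
    ∫ x in (0:ℝ)..t, x ^ (ε - 1) = t ^ ε / ε := by
  rw [integral_rpow (Or.inl (by linarith)), sub_add_cancel, zero_rpow hε.ne', sub_zero]

theorem tendsto_inv_Gamma_mul_integral_rpow_sub_one {t : ℝ} (ht : 0 < t) :
    Tendsto (fun ε => (Gamma ε)⁻¹ * ∫ x in (0:ℝ)..t, x ^ (ε - 1)) (𝓝[>] 0) (𝓝 1) := by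
  have hmass : ∀ ε > (0:ℝ),
      (Gamma ε)⁻¹ * ∫ x in (0:ℝ)..t, x ^ (ε - 1) = t ^ ε / Gamma (ε + 1) := by
    intro ε hε
    rw [integral_rpow_sub_one hε, inv_Gamma_eq_div_Gamma_add_one]
    field_simp
  have hpow : Tendsto (fun ε : ℝ => t ^ ε) (𝓝 0) (𝓝 1) := by
    simpa using (continuousAt_const_rpow (b := 0) ht.ne').tendsto
  refine tendsto_nhdsWithin_congr (fun ε hε => (hmass ε hε).symm) ?_
  simpa [Pi.div_def] using
    (hpow.div tendsto_Gamma_add_one_nhds_zero one_ne_zero).mono_left nhdsWithin_le_nhds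

theorem tendsto_inv_Gamma_mul_rpow_sub_one {x : ℝ} (hx : 0 < x) :
    Tendsto (fun ε => (Gamma ε)⁻¹ * x ^ (ε - 1)) (𝓝 0) (𝓝 0) := by
  have hpow : Tendsto (fun ε : ℝ => x ^ (ε - 1)) (𝓝 0) (𝓝 (x ^ ((0:ℝ) - 1))) :=
    (continuousAt_const_rpow hx.ne').tendsto.comp ((continuous_sub_right 1).tendsto 0)
  simpa using tendsto_inv_Gamma_nhds_zero.mul hpow

theorem tendstoUniformlyOn_inv_Gamma_mul_rpow_sub_one {δ : ℝ} (hδ : 0 < δ) :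
    TendstoUniformlyOn (fun ε x => (Gamma ε)⁻¹ * x ^ (ε - 1)) 0 (𝓝[>] 0) (Ici δ) := by
  have hbound :=
    (tendsto_inv_Gamma_mul_rpow_sub_one hδ).mono_left (nhdsWithin_le_nhds (s := Ioi 0))
  rw [Metric.tendstoUniformlyOn_iff]
  intro η hη
  filter_upwards [hbound.eventually_lt_const hη, Ioc_mem_nhdsGT (zero_lt_one' ℝ)]
    with ε hε ⟨hε0, hε1⟩ x (hx : δ ≤ x)
  have hΓ : 0 < (Gamma ε)⁻¹ := inv_pos.2 (Gamma_pos_of_pos hε0)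
  have hx0 : 0 < x ^ (ε - 1) := rpow_pos_of_pos (hδ.trans_le hx) _
  calc dist 0 ((Gamma ε)⁻¹ * x ^ (ε - 1)) = (Gamma ε)⁻¹ * x ^ (ε - 1) := by
        rw [dist_comm, Real.dist_eq, sub_zero, abs_of_pos (mul_pos hΓ hx0)]
    _ ≤ (Gamma ε)⁻¹ * δ ^ (ε - 1) :=
        mul_le_mul_of_nonneg_left (rpow_le_rpow_of_nonpos hδ hx (by linarith)) hΓ.le
    _ < η := hε

section FractionalIntegral

variable {E : Type*} [NormedAddCommGroup E] [NormedSpace ℝ E] [CompleteSpace E]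

theorem tendsto_inv_Gamma_smul_integral_rpow_sub_one_smul {t : ℝ} (ht : 0 < t) {g : ℝ → E}
    {a : E} (hg : IntervalIntegrable g volume 0 t) (hga : Tendsto g (𝓝[>] 0) (𝓝 a)) :
    Tendsto (fun ε => (Gamma ε)⁻¹ • ∫ x in (0:ℝ)..t, x ^ (ε - 1) • g x) (𝓝[>] 0) (𝓝 a) := by
  have hpeak := tendsto_setIntegral_peak_smul_of_integrableOn_of_tendsto (μ := volume)
    (φ := fun ε x => (Gamma ε)⁻¹ * x ^ (ε - 1)) (g := g) (x₀ := 0) (l := 𝓝[>] (0:ℝ))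
    measurableSet_Ioc measurableSet_Ioc subset_rfl self_mem_nhdsWithin
    (by simp) ?nonneg ?uniform ?mass ?meas
    ((intervalIntegrable_iff_integrableOn_Ioc_of_le ht.le).1 hg)
    (hga.mono_left (nhdsWithin_mono _ Ioc_subset_Ioi_self))
  · refine hpeak.congr' ?_
    filter_upwards with ε
    rw [intervalIntegral.integral_of_le ht.le, ← integral_smul]
    simp_rw [smul_smul]
  case nonneg =>
    filter_upwards [self_mem_nhdsWithin] with ε (hε : 0 < ε) x hx
    exact mul_nonneg (inv_pos.2 (Gamma_pos_of_pos hε)).le (rpow_nonneg hx.1.le _)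
  case uniform =>
    intro u hu hu0
    obtain ⟨δ, hδ, hball⟩ := Metric.isOpen_iff.1 hu 0 hu0
    refine (tendstoUniformlyOn_inv_Gamma_mul_rpow_sub_one hδ).mono fun x hx => ?_
    by_contra hlt
    exact hx.2 (hball (by simpa [abs_of_pos hx.1.1] using lt_of_not_ge hlt))
  case mass =>
    simpa only [intervalIntegral.integral_of_le ht.le, integral_const_mul] using
      tendsto_inv_Gamma_mul_integral_rpow_sub_one ht
  case meas =>
    filter_upwards with ε
    exact ((measurable_id.pow_const _).const_mul _).aestronglyMeasurable

noncomputable def riemannLiouvilleIntegral (α : ℝ) (g : ℝ → E) (t : ℝ) : E :=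
  (Gamma α)⁻¹ • ∫ τ in (0:ℝ)..t, (t - τ) ^ (α - 1) • g τ

theorem tendsto_riemannLiouvilleIntegral_nhdsGT_zero {t : ℝ} (ht : 0 < t) {g : ℝ → E} {a : E}
    (hg : IntervalIntegrable g volume 0 t) (hga : Tendsto g (𝓝[<] t) (𝓝 a)) :
    Tendsto (fun α => riemannLiouvilleIntegral α g t) (𝓝[>] 0) (𝓝 a) := by
  have hreflect : Tendsto (fun x => t - x) (𝓝[>] 0) (𝓝[<] t) := by
    refine tendsto_nhdsWithin_iff.2 ⟨?_, eventually_nhdsWithin_of_forall fun x hx => ?_⟩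
    · simpa using ((continuous_sub_left t).tendsto 0).mono_left nhdsWithin_le_nhds
    · simpa using (hx : 0 < x)
  have hg' : IntervalIntegrable (fun x => g (t - x)) volume 0 t := by
    simpa using (hg.comp_sub_left t).symm
  convert tendsto_inv_Gamma_smul_integral_rpow_sub_one_smul ht hg' (hga.comp hreflect) using 2
    with α
  have hsubst := intervalIntegral.integral_comp_sub_left
    (fun x => x ^ (α - 1) • g (t - x)) (a := 0) (b := t) t
  simp only [sub_sub_cancel, sub_self, sub_zero] at hsubst
  rw [riemannLiouvilleIntegral, hsubst]

end FractionalIntegral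

theorem stmt_8_general (T : ℝ)
    (f f' : ℝ → ℝ)
    (hf' : ContinuousOn f' (Icc 0 T))
    (t : ℝ) (ht : t ∈ Ioc (0:ℝ) T) :
    Tendsto (fun ε : ℝ => f 0 * t ^ (ε - 1) / Real.Gamma ε +
        (1 / Real.Gamma ε) * ∫ τ in (0:ℝ)..t, (t - τ) ^ (ε - 1) * f' τ)
      (𝓝[>] 0) (𝓝 (f' t)) := by
  obtain ⟨ht0, htT⟩ := ht
  have hboundary : Tendsto (fun ε => f 0 * ((Gamma ε)⁻¹ * t ^ (ε - 1))) (𝓝[>] 0) (𝓝 0) := by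
    simpa using (tendsto_const_nhds.mul (tendsto_inv_Gamma_mul_rpow_sub_one ht0)).mono_left
      nhdsWithin_le_nhds
  have hintegrable : IntervalIntegrable f' volume 0 t :=
    (hf'.mono (by simpa [uIcc_of_le ht0.le] using Icc_subset_Icc_right htT)).intervalIntegrable
  have hleft : Tendsto f' (𝓝[<] t) (𝓝 (f' t)) :=
    (hf' t ⟨ht0.le, htT⟩).mono_of_mem_nhdsWithin (Icc_mem_nhdsLT_of_mem ⟨ht0, htT⟩)
  have hlim := hboundary.add (tendsto_riemannLiouvilleIntegral_nhdsGT_zero ht0 hintegrable hleft)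
  rw [zero_add] at hlim
  refine hlim.congr fun ε => ?_
  simp only [riemannLiouvilleIntegral, smul_eq_mul]
  ring

/-- For `T > 0` and `f` continuously differentiable on `[0,T]` with derivative `f'`,
for every `t ∈ (0,T]`,
`lim_{ε→0⁺} [ f(0) t^(ε−1)/Γ(ε) + (1/Γ(ε)) ∫_0^t (t − τ)^(ε−1) f'(τ) dτ ] = f'(t)`. -/
theorem stmt_8 (T : ℝ) (hT : 0 < T)
    (f f' : ℝ → ℝ) (hf : ∀ τ ∈ Icc (0:ℝ) T, HasDerivAt f (f' τ) τ)
    (hf' : ContinuousOn f' (Icc 0 T))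
    (t : ℝ) (ht : t ∈ Ioc (0:ℝ) T) :
    Tendsto (fun ε : ℝ => f 0 * t ^ (ε - 1) / Real.Gamma ε +
        (1 / Real.Gamma ε) * ∫ τ in (0:ℝ)..t, (t - τ) ^ (ε - 1) * f' τ)
      (𝓝[>] 0) (𝓝 (f' t)) :=
  stmt_8_general T f f' hf' t ht
end
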